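/- Right commutative cut (rightist substitution): if Γ and U are suspension-normal, Γ ; · ⊢ A⁻ is derivable, and Γ, A⁻ ; L ⊢ U is derivable (in any of the three sequent forms), then Γ ; L ⊢ U is derivable in the focused sequent calculus for polarized intuitionistic logic. -/

import Mathlib

namespace StructuralFocalization

/- Polarized propositional intuitionistic logic -/
mutual
inductive PProp : Type
  | atom : Nat → PProp
  | down : NProp → PProp
  | bot  : PProp
  | or   : PProp → PProp → PProp
  | top  : PProp
  | and  : PProp → PProp → PProp
inductive NProp : Type
  | atom : Nat → NProp
  | up   : PProp → NProp
  | imp  : PProp → NProp → NProp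
  | top  : NProp
  | and  : NProp → NProp → NProp
end

/- Hypotheses: negative propositions or suspended positives ⟨A⁺⟩ -/
inductive Hyp : Type
  | neg  : NProp → Hyp
  | susp : PProp → Hyp

/- Succedents: A⁺, A⁻, or suspended ⟨A⁻⟩ -/
inductive Succ : Type
  | pos  : PProp → Succ
  | neg  : NProp → Succ
  | susp : NProp → Succ

abbrev Ctx := List Hyp

def Succ.stable : Succ → Prop
  | .pos _ => True
  | .susp _ => True
  | .neg _ => False

def Hyp.suspNormal : Hyp → Prop
  | .susp (PProp.atom _) => True
  | .susp _ => False
  | .neg _ => True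

def Ctx.suspNormal (Γ : Ctx) : Prop := ∀ h ∈ Γ, h.suspNormal

def Succ.suspNormal : Succ → Prop
  | .susp (NProp.atom _) => True
  | .susp _ => False
  | _ => True

/- The focused sequent calculus (Figures 3 and 4 of "Structural focalization",
   with the generalized id⁺/id⁻ rules for arbitrary suspended propositions). -/
mutual
/-- Right focus: Γ ⊢ [A⁺] -/
inductive RFoc : Ctx → PProp → Prop
  | idP {Γ A} : Hyp.susp A ∈ Γ → RFoc Γ A
  | downR {Γ A} : Inv Γ [] (Succ.neg A) → RFoc Γ (PProp.down A)
  | orR1 {Γ A B} : RFoc Γ A → RFoc Γ (PProp.or A B)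
  | orR2 {Γ A B} : RFoc Γ B → RFoc Γ (PProp.or A B)
  | topR {Γ} : RFoc Γ PProp.top
  | andR {Γ A B} : RFoc Γ A → RFoc Γ B → RFoc Γ (PProp.and A B)
/-- Inversion: Γ ; Ω ⊢ U -/
inductive Inv : Ctx → List PProp → Succ → Prop
  | focR {Γ A} : RFoc Γ A → Inv Γ [] (Succ.pos A)
  | focL {Γ A U} : Hyp.neg A ∈ Γ → Succ.stable U → LFoc Γ A U → Inv Γ [] U
  | etaP {Γ p Ω U} : Inv (Hyp.susp (PProp.atom p) :: Γ) Ω U → Inv Γ (PProp.atom p :: Ω) U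
  | downL {Γ A Ω U} : Inv (Hyp.neg A :: Γ) Ω U → Inv Γ (PProp.down A :: Ω) U
  | botL {Γ Ω U} : Inv Γ (PProp.bot :: Ω) U
  | orL {Γ A B Ω U} : Inv Γ (A :: Ω) U → Inv Γ (B :: Ω) U → Inv Γ (PProp.or A B :: Ω) U
  | topPL {Γ Ω U} : Inv Γ Ω U → Inv Γ (PProp.top :: Ω) U
  | andPL {Γ A B Ω U} : Inv Γ (A :: B :: Ω) U → Inv Γ (PProp.and A B :: Ω) U
  | etaN {Γ p} : Inv Γ [] (Succ.susp (NProp.atom p)) → Inv Γ [] (Succ.neg (NProp.atom p))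
  | upR {Γ A} : Inv Γ [] (Succ.pos A) → Inv Γ [] (Succ.neg (NProp.up A))
  | impR {Γ A B} : Inv Γ [A] (Succ.neg B) → Inv Γ [] (Succ.neg (NProp.imp A B))
  | topNR {Γ} : Inv Γ [] (Succ.neg NProp.top)
  | andNR {Γ A B} : Inv Γ [] (Succ.neg A) → Inv Γ [] (Succ.neg B) →
      Inv Γ [] (Succ.neg (NProp.and A B))
/-- Left focus: Γ ; [A⁻] ⊢ U -/
inductive LFoc : Ctx → NProp → Succ → Prop
  | idN {Γ A} : LFoc Γ A (Succ.susp A)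
  | upL {Γ A U} : Inv Γ [A] U → LFoc Γ (NProp.up A) U
  | impL {Γ A B U} : RFoc Γ A → LFoc Γ B U → LFoc Γ (NProp.imp A B) U
  | andL1 {Γ A B U} : LFoc Γ A U → LFoc Γ (NProp.and A B) U
  | andL2 {Γ A B U} : LFoc Γ B U → LFoc Γ (NProp.and A B) U
end

/- Unpolarized propositions and Kleene's G3 -/
inductive UProp : Type
  | atom : Nat → UProp
  | bot  : UProp
  | or   : UProp → UProp → UProp
  | top  : UProp
  | and  : UProp → UProp → UProp
  | imp  : UProp → UProp → UProp

inductive G3 : List UProp → UProp → Prop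
  | init {Γ p} : UProp.atom p ∈ Γ → G3 Γ (UProp.atom p)
  | botL {Γ Q} : UProp.bot ∈ Γ → G3 Γ Q
  | orR1 {Γ A B} : G3 Γ A → G3 Γ (UProp.or A B)
  | orR2 {Γ A B} : G3 Γ B → G3 Γ (UProp.or A B)
  | orL {Γ A B Q} : UProp.or A B ∈ Γ → G3 (A :: Γ) Q → G3 (B :: Γ) Q → G3 Γ Q
  | topR {Γ} : G3 Γ UProp.top
  | andR {Γ A B} : G3 Γ A → G3 Γ B → G3 Γ (UProp.and A B)
  | andL1 {Γ A B Q} : UProp.and A B ∈ Γ → G3 (A :: Γ) Q → G3 Γ Q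
  | andL2 {Γ A B Q} : UProp.and A B ∈ Γ → G3 (B :: Γ) Q → G3 Γ Q
  | impR {Γ A B} : G3 (A :: Γ) B → G3 Γ (UProp.imp A B)
  | impL {Γ A B Q} : UProp.imp A B ∈ Γ → G3 Γ A → G3 (B :: Γ) Q → G3 Γ Q

/-- G3 with an ordered auxiliary context Ψ: Γ; Ψ ⊢ Q -/
inductive G3Psi : List UProp → List UProp → UProp → Prop
  | cons {Γ P Ψ Q} : G3Psi (P :: Γ) Ψ Q → G3Psi Γ (P :: Ψ) Q
  | nil {Γ Q} : G3 Γ Q → G3Psi Γ [] Q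

/- Erasure -/
mutual
def eraseP : PProp → UProp
  | .atom p => .atom p
  | .down A => eraseN A
  | .bot => .bot
  | .or A B => .or (eraseP A) (eraseP B)
  | .top => .top
  | .and A B => .and (eraseP A) (eraseP B)
def eraseN : NProp → UProp
  | .atom p => .atom p
  | .up A => eraseP A
  | .imp A B => .imp (eraseP A) (eraseN B)
  | .top => .top
  | .and A B => .and (eraseN A) (eraseN B)
end

def eraseHyp : Hyp → UProp
  | .neg A => eraseN A
  | .susp A => eraseP A

def eraseCtx (Γ : Ctx) : List UProp := Γ.map eraseHyp

def eraseSucc : Succ → UProp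
  | .pos A => eraseP A
  | .neg A => eraseN A
  | .susp A => eraseN A

/-!
Cut admissibility is proved by structural induction on the cut formula. For a fixed formula,
the left (resp. right) commutative cut reduces to the positive (resp. negative) principal cut by
induction on the derivation of `Γ ; Ω ⊢ A⁺` (resp. of `Γ, A⁻ ; L ⊢ U`), moving the cut upward
until the cut formula becomes principal. A principal cut in turn needs only principal cuts at
immediate subformulas, plus rightist substitution at `A` for `↓A` and leftist substitution at `P`
for `↑P`, so the whole cycle descends along subformulas.

Suspension-normality is what makes the principal cuts go through: it rules out `id⁺` on a
non-atomic suspended proposition, and forces `id⁻` to act only on atoms, where the negative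
derivation must end in `η⁻`.
-/

theorem Ctx.suspNormal.cons {h : Hyp} {Γ : Ctx} (hh : h.suspNormal) (hΓ : Γ.suspNormal) :
    Ctx.suspNormal (h :: Γ) :=
  List.forall_mem_cons.2 ⟨hh, hΓ⟩

theorem cons_subset_cons_swap {Δ Γ : Ctx} {a b : Hyp} (s : Δ ⊆ a :: Γ) :
    b :: Δ ⊆ a :: b :: Γ :=
  List.Subset.trans (List.cons_subset_cons b s) (List.Perm.swap a b Γ).subset

mutual
theorem RFoc.weaken {Γ Γ' : Ctx} (s : Γ ⊆ Γ') : ∀ {C}, RFoc Γ C → RFoc Γ' C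
  | _, .idP m => .idP (s m)
  | _, .downR d => .downR (d.weaken s)
  | _, .orR1 f => .orR1 (f.weaken s)
  | _, .orR2 f => .orR2 (f.weaken s)
  | _, .topR => .topR
  | _, .andR f g => .andR (f.weaken s) (g.weaken s)
theorem Inv.weaken {Γ Γ' : Ctx} (s : Γ ⊆ Γ') : ∀ {Ω U}, Inv Γ Ω U → Inv Γ' Ω U
  | _, _, .focR f => .focR (f.weaken s)
  | _, _, .focL m st l => .focL (s m) st (l.weaken s)
  | _, _, .etaP d => .etaP (d.weaken (List.cons_subset_cons _ s))
  | _, _, .downL d => .downL (d.weaken (List.cons_subset_cons _ s))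
  | _, _, .botL => .botL
  | _, _, .orL d e => .orL (d.weaken s) (e.weaken s)
  | _, _, .topPL d => .topPL (d.weaken s)
  | _, _, .andPL d => .andPL (d.weaken s)
  | _, _, .etaN d => .etaN (d.weaken s)
  | _, _, .upR d => .upR (d.weaken s)
  | _, _, .impR d => .impR (d.weaken s)
  | _, _, .topNR => .topNR
  | _, _, .andNR d e => .andNR (d.weaken s) (e.weaken s)
theorem LFoc.weaken {Γ Γ' : Ctx} (s : Γ ⊆ Γ') : ∀ {B U}, LFoc Γ B U → LFoc Γ' B U
  | _, _, .idN => .idN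
  | _, _, .upL d => .upL (d.weaken s)
  | _, _, .impL f l => .impL (f.weaken s) (l.weaken s)
  | _, _, .andL1 l => .andL1 (l.weaken s)
  | _, _, .andL2 l => .andL2 (l.weaken s)
end

def PrincipalCutPos (P : PProp) : Prop :=
  ∀ {Γ Ω U}, Γ.suspNormal → U.suspNormal → RFoc Γ P → Inv Γ (P :: Ω) U → Inv Γ Ω U

def PrincipalCutNeg (A : NProp) : Prop :=
  ∀ {Γ U}, Γ.suspNormal → U.suspNormal → U.stable → Inv Γ [] (.neg A) → LFoc Γ A U →
    Inv Γ [] U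

section LeftistSubstitution

variable {P : PProp} {U : Succ}

-- The succedent is an equation rather than the index `.pos P`: structural recursion on
-- `Inv`/`LFoc` needs the indices of the major premise to be variables.
mutual
theorem Inv.leftist_subst (cut : PrincipalCutPos P) (hU : U.suspNormal) (hst : U.stable) :
    ∀ {Γ Ω S}, Γ.suspNormal → Inv Γ Ω S → S = .pos P → Inv Γ [P] U → Inv Γ Ω U
  | _, _, _, hΓ, .focR f, rfl, e => cut hΓ hU f e
  | _, _, _, hΓ, .focL m _ l, hS, e => .focL m hst (l.leftist_subst cut hU hst hΓ hS e)
  | _, _, _, hΓ, .etaP d, hS, e =>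
      .etaP (d.leftist_subst cut hU hst (hΓ.cons trivial) hS
        (e.weaken (List.subset_cons_self _ _)))
  | _, _, _, hΓ, .downL d, hS, e =>
      .downL (d.leftist_subst cut hU hst (hΓ.cons trivial) hS
        (e.weaken (List.subset_cons_self _ _)))
  | _, _, _, _, .botL, _, _ => .botL
  | _, _, _, hΓ, .orL d₁ d₂, hS, e =>
      .orL (d₁.leftist_subst cut hU hst hΓ hS e) (d₂.leftist_subst cut hU hst hΓ hS e)
  | _, _, _, hΓ, .topPL d, hS, e => .topPL (d.leftist_subst cut hU hst hΓ hS e)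
  | _, _, _, hΓ, .andPL d, hS, e => .andPL (d.leftist_subst cut hU hst hΓ hS e)
theorem LFoc.leftist_subst (cut : PrincipalCutPos P) (hU : U.suspNormal) (hst : U.stable) :
    ∀ {Γ B S}, Γ.suspNormal → LFoc Γ B S → S = .pos P → Inv Γ [P] U → LFoc Γ B U
  | _, _, _, hΓ, .upL d, hS, e => .upL (d.leftist_subst cut hU hst hΓ hS e)
  | _, _, _, hΓ, .impL f l, hS, e => .impL f (l.leftist_subst cut hU hst hΓ hS e)
  | _, _, _, hΓ, .andL1 l, hS, e => .andL1 (l.leftist_subst cut hU hst hΓ hS e)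
  | _, _, _, hΓ, .andL2 l, hS, e => .andL2 (l.leftist_subst cut hU hst hΓ hS e)
end

end LeftistSubstitution

section RightistSubstitution

variable {A : NProp}

-- Generalized from `.neg A :: Γ` to any `Δ ⊆ .neg A :: Γ`, because `η⁺` and `↓L` extend the
-- context in front of `A`.
mutual
theorem RFoc.rightist_subst (cut : PrincipalCutNeg A) :
    ∀ {Γ : Ctx} {Δ C}, RFoc Δ C → Δ ⊆ .neg A :: Γ → Γ.suspNormal → Inv Γ [] (.neg A) →
      RFoc Γ C
  | _, _, _, .idP m, s, _, _ => .idP ((List.mem_cons.1 (s m)).resolve_left Hyp.noConfusion)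
  | _, _, _, .downR e, s, hΓ, d => .downR (e.rightist_subst cut s hΓ d trivial)
  | _, _, _, .orR1 f, s, hΓ, d => .orR1 (f.rightist_subst cut s hΓ d)
  | _, _, _, .orR2 f, s, hΓ, d => .orR2 (f.rightist_subst cut s hΓ d)
  | _, _, _, .topR, _, _, _ => .topR
  | _, _, _, .andR f g, s, hΓ, d =>
      .andR (f.rightist_subst cut s hΓ d) (g.rightist_subst cut s hΓ d)
theorem Inv.rightist_subst (cut : PrincipalCutNeg A) :
    ∀ {Γ : Ctx} {Δ Ω U}, Inv Δ Ω U → Δ ⊆ .neg A :: Γ → Γ.suspNormal → Inv Γ [] (.neg A) →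
      U.suspNormal → Inv Γ Ω U
  | _, _, _, _, .focR f, s, hΓ, d, _ => .focR (f.rightist_subst cut s hΓ d)
  | _, _, _, _, .focL m st l, s, hΓ, d, hU => by
      have l' := l.rightist_subst cut s hΓ d hU
      rcases List.mem_cons.1 (s m) with h | h
      · cases h
        exact cut hΓ hU st d l'
      · exact .focL h st l'
  | _, _, _, _, .etaP e, s, hΓ, d, hU =>
      .etaP (e.rightist_subst cut (cons_subset_cons_swap s) (hΓ.cons trivial)
        (d.weaken (List.subset_cons_self _ _)) hU)
  | _, _, _, _, .downL e, s, hΓ, d, hU =>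
      .downL (e.rightist_subst cut (cons_subset_cons_swap s) (hΓ.cons trivial)
        (d.weaken (List.subset_cons_self _ _)) hU)
  | _, _, _, _, .botL, _, _, _, _ => .botL
  | _, _, _, _, .orL e₁ e₂, s, hΓ, d, hU =>
      .orL (e₁.rightist_subst cut s hΓ d hU) (e₂.rightist_subst cut s hΓ d hU)
  | _, _, _, _, .topPL e, s, hΓ, d, hU => .topPL (e.rightist_subst cut s hΓ d hU)
  | _, _, _, _, .andPL e, s, hΓ, d, hU => .andPL (e.rightist_subst cut s hΓ d hU)
  | _, _, _, _, .etaN e, s, hΓ, d, _ => .etaN (e.rightist_subst cut s hΓ d trivial)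
  | _, _, _, _, .upR e, s, hΓ, d, _ => .upR (e.rightist_subst cut s hΓ d trivial)
  | _, _, _, _, .impR e, s, hΓ, d, _ => .impR (e.rightist_subst cut s hΓ d trivial)
  | _, _, _, _, .topNR, _, _, _, _ => .topNR
  | _, _, _, _, .andNR e₁ e₂, s, hΓ, d, _ =>
      .andNR (e₁.rightist_subst cut s hΓ d trivial) (e₂.rightist_subst cut s hΓ d trivial)
theorem LFoc.rightist_subst (cut : PrincipalCutNeg A) :
    ∀ {Γ : Ctx} {Δ B U}, LFoc Δ B U → Δ ⊆ .neg A :: Γ → Γ.suspNormal → Inv Γ [] (.neg A) →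
      U.suspNormal → LFoc Γ B U
  | _, _, _, _, .idN, _, _, _, _ => .idN
  | _, _, _, _, .upL e, s, hΓ, d, hU => .upL (e.rightist_subst cut s hΓ d hU)
  | _, _, _, _, .impL f l, s, hΓ, d, hU =>
      .impL (f.rightist_subst cut s hΓ d) (l.rightist_subst cut s hΓ d hU)
  | _, _, _, _, .andL1 l, s, hΓ, d, hU => .andL1 (l.rightist_subst cut s hΓ d hU)
  | _, _, _, _, .andL2 l, s, hΓ, d, hU => .andL2 (l.rightist_subst cut s hΓ d hU)
end

end RightistSubstitution

mutual
theorem principal_cut_pos : ∀ P : PProp, PrincipalCutPos P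
  | .atom _ => by
    intro _ _ f e
    cases f with
    | idP m => cases e with
      | etaP d => exact d.weaken (List.cons_subset.2 ⟨m, List.Subset.refl _⟩)
  | .down A => by
    intro hΓ hU f e
    cases e with
    | downL e => cases f with
      | idP m => exact (hΓ _ m).elim
      | downR d => exact e.rightist_subst (principal_cut_neg A) (List.Subset.refl _) hΓ d hU
  | .bot => by
    intro hΓ _ f _
    cases f with
    | idP m => exact (hΓ _ m).elim
  | .or A B => by
    intro hΓ hU f e
    cases e with
    | orL e₁ e₂ => cases f with
      | idP m => exact (hΓ _ m).elim
      | orR1 f => exact principal_cut_pos A hΓ hU f e₁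
      | orR2 f => exact principal_cut_pos B hΓ hU f e₂
  | .top => by
    intro _ _ _ e
    cases e with
    | topPL e => exact e
  | .and A B => by
    intro hΓ hU f e
    cases e with
    | andPL e => cases f with
      | idP m => exact (hΓ _ m).elim
      | andR f g => exact principal_cut_pos B hΓ hU g (principal_cut_pos A hΓ hU f e)
theorem principal_cut_neg : ∀ A : NProp, PrincipalCutNeg A
  | .atom _ => by
    intro _ _ _ d l
    cases l with
    | idN => cases d with
      | focL _ st _ => exact st.elim
      | etaN d => exact d
  | .up P => by
    intro hΓ hU hst d l
    cases l with
    | idN => exact hU.elim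
    | upL e => cases d with
      | focL _ st _ => exact st.elim
      | upR d => exact d.leftist_subst (principal_cut_pos P) hU hst hΓ rfl e
  | .imp P B => by
    intro hΓ hU hst d l
    cases l with
    | idN => exact hU.elim
    | impL f l => cases d with
      | focL _ st _ => exact st.elim
      | impR d =>
        exact principal_cut_neg B hΓ hU hst (principal_cut_pos P hΓ trivial f d) l
  | .top => by
    intro _ hU _ _ l
    cases l with
    | idN => exact hU.elim
  | .and B C => by
    intro hΓ hU hst d l
    cases d with
    | focL _ st _ => exact st.elim
    | andNR d₁ d₂ => cases l with
      | idN => exact hU.elim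
      | andL1 l => exact principal_cut_neg B hΓ hU hst d₁ l
      | andL2 l => exact principal_cut_neg C hΓ hU hst d₂ l
end

/-- Right commutative cut (rightist substitution), in all three sequent forms. -/
theorem right_commutative_cut {Γ : Ctx} {A : NProp}
    (hΓ : Ctx.suspNormal Γ) (h1 : Inv Γ [] (Succ.neg A)) :
    (∀ C, RFoc (Hyp.neg A :: Γ) C → RFoc Γ C) ∧
    (∀ Ω U, Succ.suspNormal U → Inv (Hyp.neg A :: Γ) Ω U → Inv Γ Ω U) ∧
    (∀ B U, Succ.suspNormal U → LFoc (Hyp.neg A :: Γ) B U → LFoc Γ B U) :=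
  ⟨fun _ f => f.rightist_subst (principal_cut_neg A) (List.Subset.refl _) hΓ h1,
   fun _ _ hU e => e.rightist_subst (principal_cut_neg A) (List.Subset.refl _) hΓ h1 hU,
   fun _ _ hU l => l.rightist_subst (principal_cut_neg A) (List.Subset.refl _) hΓ h1 hU⟩

end StructuralFocalization
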